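/- Suppose n ≡ 2 (mod 4) and Qₙ admits a distance magic labeling l (viewed as a real vector indexed by 𝔽₂ⁿ with A₁l ∈ span{𝟏}). Then for every nonempty set D of odd integers in {1,...,n}, l is also a D-magic labeling, i.e., (∑_{i ∈ D} A_i) l ∈ span{𝟏}. -/

import Mathlib

/-!
`A₁` maps `span {𝟏, l}` into `span {𝟏}`, because `A₁ 𝟏 = n 𝟏` and `A₁ l` is constant. Counting the
neighbours of a vertex gives the three-term recurrence `A₁ A_{i+1} = (i + 2) A_{i+2} + (n - i) A_i`,
so by induction `A_i l ∈ span {𝟏}` for odd `i` and `A_i l ∈ span {𝟏, l}` for even `i`.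
-/

/-- The `i`-th distance matrix of the hypercube `Qₙ` (over ℝ). -/
noncomputable def distMatrix (n i : ℕ) :
    Matrix (Fin n → ZMod 2) (Fin n → ZMod 2) ℝ :=
  fun u v => if hammingDist u v = i then 1 else 0

open Finset
open scoped Matrix

section Recurrence

variable {K M : Type*} [Field K] [AddCommGroup M] [Module K M]

theorem apply_mem_of_three_term_recurrence (A : ℕ → Module.End K M) (a b : ℕ → K)
    (ha : ∀ i, a i ≠ 0) (h0 : A 0 = 1) (hrec : ∀ i, A 1 * A (i + 1) = a i • A (i + 2) + b i • A i)
    {S T : Submodule K M} (hST : S ≤ T) (hT : T ≤ S.comap (A 1)) {x : M} (hx : x ∈ T) (k : ℕ) :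
    A (2 * k) x ∈ T ∧ A (2 * k + 1) x ∈ S := by
  have step : ∀ {U : Submodule K M} (i : ℕ), A 1 (A (i + 1) x) ∈ U → A i x ∈ U →
      A (i + 2) x ∈ U := by
    intro U i h1 h2
    have h := LinearMap.congr_fun (hrec i) x
    simp only [Module.End.mul_apply, LinearMap.add_apply, LinearMap.smul_apply] at h
    refine (U.smul_mem_iff (ha i)).1 ?_
    rw [eq_sub_of_add_eq h.symm]
    exact U.sub_mem h1 (U.smul_mem _ h2)
  induction k with
  | zero => exact ⟨by simpa [h0] using hx, hT hx⟩
  | succ k ih =>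
    have hT' : A (2 * k + 2) x ∈ T := step _ (hST (hT (hST ih.2))) ih.1
    exact ⟨hT', step _ (hT hT') ih.2⟩

end Recurrence

section Hamming

variable {ι : Type*} [Fintype ι]

theorem card_eq_add_hammingDist (u w : ι → ZMod 2) :
    #{j | u j = w j} + hammingDist u w = Fintype.card ι :=
  card_filter_add_card_filter_not _

variable [DecidableEq ι]

theorem hammingDist_eq_one_iff {u v : ι → ZMod 2} :
    hammingDist u v = 1 ↔ ∃ j, u + Pi.single j 1 = v := by
  have hZ : ∀ a b : ZMod 2, a ≠ b ↔ b = a + 1 := by decide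
  rw [hammingDist, card_eq_one]
  refine exists_congr fun j => ?_
  simp only [Finset.ext_iff, mem_filter, mem_univ, true_and, mem_singleton, funext_iff,
    Pi.add_apply, Pi.single_apply]
  refine forall_congr' fun i => ?_
  by_cases h : i = j
  · simp [h, hZ, eq_comm]
  · simp [h]

theorem sum_hammingDist_eq_one {N : Type*} [AddCommMonoid N] (u : ι → ZMod 2)
    (f : (ι → ZMod 2) → N) :
    ∑ v with hammingDist u v = 1, f v = ∑ j, f (u + Pi.single j 1) := by
  have himage : ({v | hammingDist u v = 1} : Finset (ι → ZMod 2))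
      = univ.image fun j => u + Pi.single j 1 := by
    ext v
    simp [hammingDist_eq_one_iff]
  rw [himage, sum_image]
  intro j _ k _ hjk
  by_contra hne
  simpa [Pi.single_apply, hne] using congrFun hjk j

theorem hammingDist_add_single_of_eq {u w : ι → ZMod 2} {j : ι} (h : u j = w j) :
    hammingDist (u + Pi.single j 1) w = hammingDist u w + 1 := by
  have hfilter : ({i | (u + Pi.single j 1 : ι → ZMod 2) i ≠ w i} : Finset ι)
      = insert j ({i | u i ≠ w i} : Finset ι) := by
    ext i
    by_cases hi : i = j
    · subst hi; simp [h]
    · simp [hi]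
  rw [hammingDist, hfilter, card_insert_of_notMem (by simp [h]), hammingDist]

theorem hammingDist_add_single_of_ne {u w : ι → ZMod 2} {j : ι} (h : u j ≠ w j) :
    hammingDist (u + Pi.single j 1) w + 1 = hammingDist u w := by
  have hZ : ∀ a b : ZMod 2, a ≠ b → a + 1 = b := by decide
  have hflip : u + Pi.single j 1 + Pi.single j 1 = u := by
    rw [add_assoc, ← Pi.single_add, CharTwo.add_self_eq_zero, Pi.single_zero, add_zero]
  conv_rhs => rw [← hflip]
  exact (hammingDist_add_single_of_eq (by simpa using hZ _ _ h)).symm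

end Hamming

theorem mem_span_one_iff {α R : Type*} [Semiring R] {v : α → R} :
    v ∈ Submodule.span R {1} ↔ ∃ c : R, v = fun _ => c := by
  simp [Submodule.mem_span_singleton, funext_iff, eq_comm]

theorem sum_distMatrix_one_mul {n : ℕ} (u : Fin n → ZMod 2) (f : (Fin n → ZMod 2) → ℝ) :
    ∑ v, distMatrix n 1 u v * f v = ∑ j, f (u + Pi.single j 1) := by
  simp only [distMatrix, ite_mul, one_mul, zero_mul]
  rw [← sum_filter, sum_hammingDist_eq_one]

theorem distMatrix_one_mulVec_one (n : ℕ) :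
    distMatrix n 1 *ᵥ 1 = fun _ => (n : ℝ) := by
  ext u
  simpa [Matrix.mulVec, dotProduct] using sum_distMatrix_one_mul u 1

theorem distMatrix_zero (n : ℕ) : distMatrix n 0 = 1 := by
  ext u v
  simp [distMatrix, Matrix.one_apply, eq_comm]

/-- Of the neighbours `u + eⱼ` of `u`, the `n - d(u, w)` with `uⱼ = wⱼ` are at distance
`d(u, w) + 1` from `w`, the other `d(u, w)` at distance `d(u, w) - 1`. -/
theorem distMatrix_one_mul (n i : ℕ) :
    distMatrix n 1 * distMatrix n (i + 1)
      = ((i : ℝ) + 2) • distMatrix n (i + 2) + ((n : ℝ) - i) • distMatrix n i := by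
  ext u w
  rw [Matrix.mul_apply, sum_distMatrix_one_mul,
    ← sum_filter_add_sum_filter_not _ (fun j => u j = w j)]
  have hagree : ∀ j ∈ ({j | u j = w j} : Finset (Fin n)),
      distMatrix n (i + 1) (u + Pi.single j 1) w = if hammingDist u w = i then 1 else 0 := by
    intro j hj
    simp [distMatrix, hammingDist_add_single_of_eq (mem_filter.1 hj).2]
  have hdiffer : ∀ j ∈ ({j | u j ≠ w j} : Finset (Fin n)),
      distMatrix n (i + 1) (u + Pi.single j 1) w = if hammingDist u w = i + 2 then 1 else 0 := by
    intro j hj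
    simp [distMatrix, ← hammingDist_add_single_of_ne (mem_filter.1 hj).2]
  rw [sum_congr rfl hagree, sum_congr rfl hdiffer, sum_const, sum_const]
  have hcard : (#{j | u j = w j} : ℝ) + hammingDist u w = n := by
    exact_mod_cast (card_eq_add_hammingDist u w).trans (Fintype.card_fin n)
  change _ + hammingDist u w • _ = _
  simp only [Matrix.add_apply, Matrix.smul_apply, distMatrix, nsmul_eq_mul, smul_eq_mul]
  split_ifs with hi hi2 hi2
  · omega
  · rw [hi] at hcard
    linarith
  · rw [hi2] at hcard ⊢
    push_cast
    ring
  · ring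

theorem stmt_19_general (n : ℕ)
    (l : (Fin n → ZMod 2) → ℝ)
    (hmagic : ∃ c : ℝ, (distMatrix n 1).mulVec l = fun _ => c)
    (D : Finset ℕ) (hDodd : ∀ i ∈ D, Odd i ∧ 1 ≤ i ∧ i ≤ n) :
    ∃ c' : ℝ, (∑ i ∈ D, distMatrix n i).mulVec l = fun _ => c' := by
  obtain ⟨c, hc⟩ := hmagic
  let A : ℕ → Module.End ℝ ((Fin n → ZMod 2) → ℝ) := fun i =>
    Matrix.toLinAlgEquiv' (distMatrix n i)
  let S := Submodule.span ℝ {(1 : (Fin n → ZMod 2) → ℝ)}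
  let T := Submodule.span ℝ {1, l}
  have hrec (i : ℕ) : A 1 * A (i + 1) = ((i : ℝ) + 2) • A (i + 2) + ((n : ℝ) - i) • A i := by
    simp only [A, ← map_mul, distMatrix_one_mul, map_add, map_smul]
  have hT : T ≤ S.comap (A 1) := by
    refine Submodule.span_le.2 (Set.insert_subset_iff.2 ⟨?_, Set.singleton_subset_iff.2 ?_⟩)
    · exact mem_span_one_iff.2 ⟨n, distMatrix_one_mulVec_one n⟩
    · exact mem_span_one_iff.2 ⟨c, hc⟩
  have hodd : ∀ i ∈ D, distMatrix n i *ᵥ l ∈ S := by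
    intro i hi
    obtain ⟨k, rfl⟩ := (hDodd i hi).1
    exact (apply_mem_of_three_term_recurrence A _ _ (fun i => by positivity)
      (by simp [A, distMatrix_zero]) hrec (Submodule.span_mono (by simp)) hT
      (Submodule.subset_span (by simp)) k).2
  rw [← mem_span_one_iff, Matrix.sum_mulVec]
  exact S.sum_mem hodd

/-- Suppose `n ≡ 2 (mod 4)` and `l` is a distance magic labeling of `Qₙ`
(viewed as a real vector with `A₁ l ∈ span{𝟏}`). Then for every nonempty set `D`
of odd integers in `{1,...,n}`, `l` is also `D`-magic: `(∑_{i∈D} A_i) l ∈ span{𝟏}`. -/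
theorem stmt_19 (n : ℕ) (hn : n % 4 = 2)
    (l : (Fin n → ZMod 2) → ℝ)
    (hlab : ∃ f : (Fin n → ZMod 2) ≃ Fin (2 ^ n), ∀ x, l x = (f x : ℕ) + 1)
    (hmagic : ∃ c : ℝ, (distMatrix n 1).mulVec l = fun _ => c)
    (D : Finset ℕ) (hD : D.Nonempty) (hDodd : ∀ i ∈ D, Odd i ∧ 1 ≤ i ∧ i ≤ n) :
    ∃ c' : ℝ, (∑ i ∈ D, distMatrix n i).mulVec l = fun _ => c' :=
  stmt_19_general n l hmagic D hDodd
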